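/- Let X(t) be a 3×3 matrix with tr X(t) = −ik, and suppose ṽ(t), w̃(t) ∈ ℂ³ solve the adjoint equation u_t = X̃u where X̃ := −ikJ + Q* and X = ikJ + Q with J = diag(1,−1,−1), Q = [[0,−Eᵀ],[E*,0]] for E(t) ∈ ℂ² and k ∈ ℝ. Then u(t) := e^{−ikt}·(ṽ(t) × w̃(t)) (cross product in ℂ³, without complex conjugation) solves u_t = X u. -/

import Mathlib

open Matrix

/-- The 3×3 potential matrix built from a vector field envelope E ∈ ℂ². -/
def Qof (E : Fin 2 → ℂ) : Matrix (Fin 3) (Fin 3) ℂ :=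
  !![0, -(E 0), -(E 1); starRingEnd ℂ (E 0), 0, 0; starRingEnd ℂ (E 1), 0, 0]

/-- J = diag(1,−1,−1). -/
def Jmat : Matrix (Fin 3) (Fin 3) ℂ := Matrix.diagonal ![1, -1, -1]

/-!
The cross product intertwines a 3×3 matrix `A` acting as a derivation on both factors with
`tr A • 1 - Aᵀ` acting on the product; this is the derivative at `M = 1` of
`(M a) ⨯₃ (M b) = det M • M⁻ᵀ (a ⨯₃ b)`. For the adjoint problem `A = -ikJ + Q̄`, and since `Q`
is skew-Hermitian, `tr A • 1 - Aᵀ = ik • 1 + (ikJ + Q)`; the factor `e^{-ikt}` removes the scalar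
part `ik • 1`.
-/

theorem mulVec_cross_add_cross_mulVec {R : Type*} [CommRing R] (A : Matrix (Fin 3) (Fin 3) R)
    (a b : Fin 3 → R) :
    (A *ᵥ a) ⨯₃ b + a ⨯₃ (A *ᵥ b) = (A.trace • 1 - Aᵀ) *ᵥ (a ⨯₃ b) := by
  ext i
  fin_cases i <;>
    simp [cross_apply, mulVec, dotProduct, Fin.sum_univ_three, trace, one_apply] <;>
    ring

theorem HasDerivAt.cross {𝕜 R : Type*} [NontriviallyNormedField 𝕜] [NormedCommRing R]
    [NormedAlgebra 𝕜 R] {v w : 𝕜 → Fin 3 → R} {v' w' : Fin 3 → R} {x : 𝕜}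
    (hv : HasDerivAt v v' x) (hw : HasDerivAt w w' x) :
    HasDerivAt (fun y => v y ⨯₃ w y) (v' ⨯₃ w x + v x ⨯₃ w') x := by
  rw [hasDerivAt_pi] at hv hw ⊢
  have hprod (i j : Fin 3) := (hv i).mul (hw j)
  intro i
  fin_cases i
  · exact ((hprod 1 2).sub (hprod 2 1)).congr_deriv (by simp [cross_apply]; ring)
  · exact ((hprod 2 0).sub (hprod 0 2)).congr_deriv (by simp [cross_apply]; ring)
  · exact ((hprod 0 1).sub (hprod 1 0)).congr_deriv (by simp [cross_apply]; ring)

theorem HasDerivAt.cexp_neg_mul_smul {ι : Type*} [Fintype ι] [DecidableEq ι] {u : ℝ → ι → ℂ}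
    {B : Matrix ι ι ℂ} {c : ℂ} {t : ℝ} (hu : HasDerivAt u ((c • 1 + B) *ᵥ u t) t) :
    HasDerivAt (fun s : ℝ => Complex.exp (-(c * s)) • u s)
      (B *ᵥ (Complex.exp (-(c * t)) • u t)) t := by
  have hexp : HasDerivAt (fun s : ℝ => Complex.exp (-(c * s))) (Complex.exp (-(c * t)) * -c) t :=
    (((hasDerivAt_id (t : ℂ)).const_mul c).neg.cexp.comp_ofReal).congr_deriv (by simp)
  refine (hexp.smul hu).congr_deriv ?_
  simp only [add_mulVec, smul_mulVec, one_mulVec, mulVec_smul]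
  module

theorem trace_Jmat : Jmat.trace = -1 := by
  simp [Jmat, trace, Fin.sum_univ_three]

theorem transpose_Jmat : Jmatᵀ = Jmat := by
  simp [Jmat]

theorem trace_Qof_map_conj (E : Fin 2 → ℂ) : ((Qof E).map (starRingEnd ℂ)).trace = 0 := by
  simp [Qof, trace, Fin.sum_univ_three]

theorem transpose_Qof_map_conj (E : Fin 2 → ℂ) : ((Qof E).map (starRingEnd ℂ))ᵀ = -Qof E := by
  ext i j
  fin_cases i <;> fin_cases j <;> simp [Qof]

theorem trace_smul_one_sub_transpose_adjoint (κ : ℂ) (E : Fin 2 → ℂ) :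
    (-κ • Jmat + (Qof E).map (starRingEnd ℂ)).trace • 1
      - (-κ • Jmat + (Qof E).map (starRingEnd ℂ))ᵀ = κ • 1 + (κ • Jmat + Qof E) := by
  rw [trace_add, trace_smul, trace_Jmat, trace_Qof_map_conj, transpose_add, transpose_smul,
    transpose_Jmat, transpose_Qof_map_conj]
  simp only [smul_eq_mul, mul_neg, mul_one, neg_neg, add_zero, neg_smul]
  abel

/-- If ṽ, w̃ solve the adjoint problem u_t = (−ikJ + Q*)u, then
u(t) := e^{−ikt}·(ṽ × w̃) (bilinear cross product in ℂ³) solves u_t = (ikJ + Q)u. -/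
theorem stmt9 (k : ℝ) (E : ℝ → Fin 2 → ℂ) (v w : ℝ → Fin 3 → ℂ)
    (hv : ∀ t, ∀ i : Fin 3, HasDerivAt (fun t' => v t' i)
      ((((-(Complex.I * (k:ℂ))) • Jmat + (Qof (E t)).map (starRingEnd ℂ)).mulVec (v t)) i) t)
    (hw : ∀ t, ∀ i : Fin 3, HasDerivAt (fun t' => w t' i)
      ((((-(Complex.I * (k:ℂ))) • Jmat + (Qof (E t)).map (starRingEnd ℂ)).mulVec (w t)) i) t) :
    ∀ t, ∀ i : Fin 3, HasDerivAt
      (fun t' : ℝ => Complex.exp (-(Complex.I * (k:ℂ) * (t':ℂ))) * (crossProduct (v t') (w t')) i)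
      ((((Complex.I * (k:ℂ)) • Jmat + Qof (E t)).mulVec
        (fun j => Complex.exp (-(Complex.I * (k:ℂ) * (t:ℂ))) * (crossProduct (v t) (w t)) j)) i) t := by
  intro t
  have hcross := (hasDerivAt_pi.2 (hv t)).cross (hasDerivAt_pi.2 (hw t))
  rw [mulVec_cross_add_cross_mulVec, trace_smul_one_sub_transpose_adjoint] at hcross
  exact hasDerivAt_pi.1 hcross.cexp_neg_mul_smul
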